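/- arXiv:2405.14273 — 2 statements merged into one kernel-verified Lean document; each statement's English description precedes it below -/
import Mathlib

section
/- With Y⁽ⁿ⁾ finite nonempty subsets of ℝ^d and a⁽ⁿ⁾ ∈ Y⁽ⁿ⁾, the function ℓ_sub(φ) = (1/N) Σₙ (max_{y∈Y⁽ⁿ⁾} φᵀy − φᵀa⁽ⁿ⁾) is Lipschitz continuous on ℝ^d, with Lipschitz constant (1/N) Σₙ max_{y₁,y₂∈Y⁽ⁿ⁾} ‖y₁ − y₂‖. -/
open scoped RealInnerProductSpace

section

variable {E : Type*} [NormedAddCommGroup E] [InnerProductSpace ℝ E]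

/-- If `y` attains the maximum for `φ`, the increment is at most `⟪φ - ψ, y - a⟫`, and `(y, a)`
is one of the pairs over which the diameter is taken. -/
lemma sup'_inner_sub_inner_sub_le (S : Finset E) (hS : S.Nonempty) {a : E} (ha : a ∈ S)
    (φ ψ : E) :
    (S.sup' hS (fun y => ⟪φ, y⟫) - ⟪φ, a⟫) - (S.sup' hS (fun y => ⟪ψ, y⟫) - ⟪ψ, a⟫)
      ≤ (S ×ˢ S).sup' (hS.product hS) (fun p => ‖p.1 - p.2‖) * ‖φ - ψ‖ := by
  obtain ⟨y, hy, hφy⟩ := S.exists_mem_eq_sup' hS (fun y => ⟪φ, y⟫)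
  have hψy : ⟪ψ, y⟫ ≤ S.sup' hS (fun y => ⟪ψ, y⟫) := S.le_sup' _ hy
  have hya : ‖y - a‖ ≤ (S ×ˢ S).sup' (hS.product hS) (fun p => ‖p.1 - p.2‖) :=
    (S ×ˢ S).le_sup' (fun p : E × E => ‖p.1 - p.2‖) (b := (y, a)) (Finset.mem_product.2 ⟨hy, ha⟩)
  calc (S.sup' hS (fun y => ⟪φ, y⟫) - ⟪φ, a⟫) - (S.sup' hS (fun y => ⟪ψ, y⟫) - ⟪ψ, a⟫)
      ≤ ⟪φ - ψ, y - a⟫ := by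
        rw [hφy, inner_sub_left, inner_sub_right, inner_sub_right]
        linarith
    _ ≤ ‖y - a‖ * ‖φ - ψ‖ := by
        rw [mul_comm]
        exact real_inner_le_norm _ _
    _ ≤ _ := mul_le_mul_of_nonneg_right hya (norm_nonneg _)

lemma abs_sup'_inner_sub_inner_sub_le (S : Finset E) (hS : S.Nonempty) {a : E} (ha : a ∈ S)
    (φ ψ : E) :
    |(S.sup' hS (fun y => ⟪φ, y⟫) - ⟪φ, a⟫) - (S.sup' hS (fun y => ⟪ψ, y⟫) - ⟪ψ, a⟫)|
      ≤ (S ×ˢ S).sup' (hS.product hS) (fun p => ‖p.1 - p.2‖) * ‖φ - ψ‖ := by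
  rw [abs_sub_le_iff]
  refine ⟨sup'_inner_sub_inner_sub_le S hS ha φ ψ, ?_⟩
  simpa only [norm_sub_rev ψ φ] using sup'_inner_sub_inner_sub_le S hS ha ψ φ

end

theorem stmt_1_general {d N : ℕ}
    (Y : Fin N → Finset (EuclideanSpace ℝ (Fin d)))
    (hY : ∀ n, (Y n).Nonempty)
    (a : Fin N → EuclideanSpace ℝ (Fin d)) (ha : ∀ n, a n ∈ Y n) :
    ∀ φ ψ : EuclideanSpace ℝ (Fin d),
      |((1 / N : ℝ) * ∑ n, ((Y n).sup' (hY n) (fun y => ⟪φ, y⟫) - ⟪φ, a n⟫))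
        - ((1 / N : ℝ) * ∑ n, ((Y n).sup' (hY n) (fun y => ⟪ψ, y⟫) - ⟪ψ, a n⟫))|
      ≤ ((1 / N : ℝ) * ∑ n, ((Y n) ×ˢ (Y n)).sup' ((hY n).product (hY n))
            (fun p => ‖p.1 - p.2‖)) * ‖φ - ψ‖ := by
  intro φ ψ
  rw [← mul_sub, ← Finset.sum_sub_distrib, abs_mul, abs_of_nonneg (by positivity), mul_assoc,
    Finset.sum_mul]
  gcongr
  exact (Finset.abs_sum_le_sum_abs _ _).trans
    (Finset.sum_le_sum fun n _ => abs_sup'_inner_sub_inner_sub_le (Y n) (hY n) (ha n) φ ψ)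

/-- The suboptimality loss is Lipschitz with constant (1/N) Σₙ max_{y₁,y₂∈Yⁿ} ‖y₁-y₂‖. -/
theorem stmt_1 {d N : ℕ} (hN : 0 < N)
    (Y : Fin N → Finset (EuclideanSpace ℝ (Fin d)))
    (hY : ∀ n, (Y n).Nonempty)
    (a : Fin N → EuclideanSpace ℝ (Fin d)) (ha : ∀ n, a n ∈ Y n) :
    ∀ φ ψ : EuclideanSpace ℝ (Fin d),
      |((1 / N : ℝ) * ∑ n, ((Y n).sup' (hY n) (fun y => ⟪φ, y⟫) - ⟪φ, a n⟫))
        - ((1 / N : ℝ) * ∑ n, ((Y n).sup' (hY n) (fun y => ⟪ψ, y⟫) - ⟪ψ, a n⟫))|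
      ≤ ((1 / N : ℝ) * ∑ n, ((Y n) ×ˢ (Y n)).sup' ((hY n).product (hY n))
            (fun p => ‖p.1 - p.2‖)) * ‖φ - ψ‖ :=
  stmt_1_general Y hY a ha
end

section
/- Let γ > 0 and suppose nonnegative reals (r_j) satisfy r_1 ≤ √2 and r_{j+1}² ≤ r_j² − (γ/2)j^{−1/2} + j^{−1} for all j ≥ 1 with r_j > 0. If k ≥ max((2(2+γ)/γ)², (8 log(2/γ)/γ)², 16e²), then r_k = 0 (i.e., the assumption r_j > 0 for all j ≤ k leads to a contradiction). -/
/-!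
Telescoping the recursion bounds `∑_{1 ≤ j < k} (γ/2 · j^{-1/2} - j⁻¹)` above by `r₁² - r_k² < 2`.
Conversely each summand dominates the increment of the potential `γ √(x - 1/4) - log (x - 1/2)`
(midpoint concavity of `√` and convexity of `x⁻¹`), so keeping the terms `j = 1, 2` exact the sum is
at least `γ (√k - 0.83) - log k + log (5/2) - 3/2`. Hence `γ s - 2 log s < 7/2 - log (5/2) + 0.83 γ`
for `s = √k`. As `s ↦ γ s - 2 log s` increases on `[2/γ, ∞)`, evaluating it at `s = 4e` when
`γ e ≥ 2` and at `s = 8 log (2/γ) / γ` when `γ e < 2` contradicts this, both times through the numerical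
inequality `1.66 / e + 4 log 2 < 5/2 + log (5/2)`. The margins are only about `0.03`, hence the shifted
potential and the exact treatment of the first two terms.
-/

open Real Finset

section Telescoping

variable {α : Type*} [AddCommGroup α] [PartialOrder α] [IsOrderedAddMonoid α]
  {u f : ℕ → α} {m n : ℕ}

lemma sub_le_sum_Ico_of_sub_le (hmn : m ≤ n) (h : ∀ j ∈ Ico m n, u (j + 1) - u j ≤ f j) :
    u n - u m ≤ ∑ j ∈ Ico m n, f j :=
  (sum_Ico_sub u hmn).symm.trans_le (sum_le_sum h)

lemma sum_Ico_le_sub_of_le_sub (hmn : m ≤ n) (h : ∀ j ∈ Ico m n, f j ≤ u j - u (j + 1)) :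
    ∑ j ∈ Ico m n, f j ≤ u m - u n := by
  refine (sum_le_sum h).trans_eq ?_
  simp_rw [← neg_sub (u (_ + 1)), sum_neg_distrib, sum_Ico_sub u hmn, neg_sub]

end Telescoping

lemma inv_le_log_add_half_sub_log_sub_half {x : ℝ} (hx : 1 / 2 < x) :
    x⁻¹ ≤ log (x + 1 / 2) - log (x - 1 / 2) := by
  -- `x⁻¹` is the first of the nonnegative terms of the series of `log (1 + (x - 1/2)⁻¹)`
  have hsum := hasSum_log_one_add_inv (a := x - 1 / 2) (by linarith)
  have hfirst := le_hasSum hsum 0 fun j _ => by positivity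
  have hratio : 1 + (x - 1 / 2)⁻¹ = (x + 1 / 2) / (x - 1 / 2) := by
    rw [eq_div_iff (by linarith), add_mul, inv_mul_cancel₀ (by linarith)]
    ring
  rw [hratio, log_div (by linarith) (by linarith)] at hfirst
  refine le_of_eq_of_le ?_ hfirst
  norm_num
  ring

lemma two_mul_sqrt_add_sub_sqrt_sub_le_inv_sqrt {x : ℝ} (hx : 1 / 4 ≤ x) :
    2 * (√(x + 3 / 4) - √(x - 1 / 4)) ≤ (√x)⁻¹ := by
  set a := √(x + 3 / 4)
  set b := √(x - 1 / 4)
  have ha : a ^ 2 = x + 3 / 4 := sq_sqrt (by linarith)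
  have hb : b ^ 2 = x - 1 / 4 := sq_sqrt (by linarith)
  have hc : √x ^ 2 = x := sq_sqrt (by linarith)
  have hc0 : 0 < √x := sqrt_pos.2 (by linarith)
  have hb0 : 0 ≤ b := sqrt_nonneg _
  have hba : b ≤ a := sqrt_le_sqrt (by linarith)
  have hmid : 2 * √x ≤ a + b := by nlinarith [sq_nonneg (a + b - 2 * √x)]
  have hdiff : (a - b) * (a + b) = 1 := by nlinarith
  rw [← one_div, le_div_iff₀ hc0]
  nlinarith

noncomputable def decrement (γ x : ℝ) : ℝ := γ / 2 * (√x)⁻¹ - x⁻¹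

noncomputable def potential (γ x : ℝ) : ℝ := γ * √(x - 1 / 4) - log (x - 1 / 2)

section
variable {γ : ℝ}

lemma potential_add_one_sub_le_decrement (hγ : 0 ≤ γ) {x : ℝ} (hx : 1 / 2 < x) :
    potential γ (x + 1) - potential γ x ≤ decrement γ x := by
  have hsqrt := mul_le_mul_of_nonneg_left
    (two_mul_sqrt_add_sub_sqrt_sub_le_inv_sqrt (x := x) (by linarith)) hγ
  have hlog := inv_le_log_add_half_sub_log_sub_half hx
  rw [potential, potential, decrement, show x + 1 - 1 / 4 = x + 3 / 4 by ring,
    show x + 1 - 1 / 2 = x + 1 / 2 by ring]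
  linarith

lemma sum_Ico_decrement_ge (hγ : 0 ≤ γ) {k : ℕ} (hk : 26 ≤ k) :
    γ * (√k - 83 / 100) - log k + log (5 / 2) - 3 / 2 ≤ ∑ j ∈ Ico 1 k, decrement γ j := by
  have htelescope : potential γ k - potential γ (3 : ℕ) ≤ ∑ j ∈ Ico 3 k, decrement γ j :=
    sub_le_sum_Ico_of_sub_le (u := fun j : ℕ => potential γ j) (by omega) fun j hj => by
      have hj : (3 : ℝ) ≤ j := by exact_mod_cast (mem_Ico.1 hj).1
      rw [Nat.cast_succ]
      exact potential_add_one_sub_le_decrement hγ (by linarith)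
  have hk' : (26 : ℝ) ≤ k := by exact_mod_cast hk
  have hsqrt_k : √k - 1 / 40 ≤ √(k - 1 / 4) := by
    have h := sq_sqrt (show (0 : ℝ) ≤ k by linarith)
    have h5 : 5 ≤ √(k : ℝ) := le_sqrt_of_sq_le (by linarith)
    exact le_sqrt_of_sq_le (by nlinarith)
  have hlog_k : log (k - 1 / 2) ≤ log k := log_le_log (by linarith) (by linarith)
  have hpotential_k : γ * (√k - 1 / 40) - log k ≤ potential γ k := by
    unfold potential
    nlinarith [mul_le_mul_of_nonneg_left hsqrt_k hγ]
  have hpotential_3 : potential γ 3 = γ * √(11 / 4) - log (5 / 2) := by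
    norm_num [potential]
  have hconst : 1 / 40 + √(11 / 4) - 1 / 2 - (√2)⁻¹ / 2 ≤ 83 / 100 := by
    have h11 := sq_sqrt (show (0 : ℝ) ≤ 11 / 4 by norm_num)
    have h2 := sq_sqrt (show (0 : ℝ) ≤ 2 by norm_num)
    have h11' : √(11 / 4) ≤ 1.6584 := by nlinarith [sqrt_nonneg (11 / 4 : ℝ)]
    have h2' : √2 ≤ 1.41422 := by nlinarith [sqrt_nonneg (2 : ℝ)]
    have h2'' : 0.7071 ≤ (√2)⁻¹ := by
      rw [le_inv_comm₀ (by norm_num) (by positivity)]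
      exact h2'.trans (by norm_num)
    linarith
  rw [sum_eq_sum_Ico_succ_bot (by omega), sum_eq_sum_Ico_succ_bot (by omega)]
  norm_num [decrement] at htelescope ⊢
  nlinarith [mul_le_mul_of_nonneg_left hconst hγ]

end

lemma mul_sub_log_le_mul_sub_log {c B s : ℝ} (hB : 0 < B) (hcB : 1 ≤ c * B) (hBs : B ≤ s) :
    c * B - log B ≤ c * s - log s := by
  have hs : 0 < s := hB.trans_le hBs
  have htangent := log_le_sub_one_of_pos (div_pos hs hB)
  rw [log_div hs.ne' hB.ne', div_sub_one hB.ne'] at htangent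
  have hslope : (s - B) / B ≤ c * (s - B) := by
    rw [div_le_iff₀ hB]
    nlinarith [mul_le_mul_of_nonneg_left hcB (sub_nonneg.2 hBs)]
  linarith

lemma lt_five_halves_add_log_five_halves :
    83 / 100 * (2 / exp 1) + 4 * log 2 < 5 / 2 + log (5 / 2) := by
  have he := exp_one_gt_d9
  have hl2 := log_two_lt_d9
  have hl54 : 1 - (5 / 4 : ℝ)⁻¹ ≤ log (5 / 4) := one_sub_inv_le_log_of_pos (by norm_num)
  have hl52 : log (5 / 2) = log 2 + log (5 / 4) := by
    rw [← log_mul (by norm_num) (by norm_num)]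
    norm_num
  have he' : 83 / 100 * (2 / exp 1) < 0.611 := by
    rw [mul_div_assoc', div_lt_iff₀ (by positivity)]
    linarith
  norm_num at hl54
  linarith

lemma lt_mul_sub_two_mul_log {γ s : ℝ} (hγ : 0 < γ) (hs₁ : 4 * exp 1 ≤ s)
    (hs₂ : 8 * log (2 / γ) / γ ≤ s) :
    7 / 2 - log (5 / 2) + 83 / 100 * γ < γ * s - 2 * log s := by
  have hnum := lt_five_halves_add_log_five_halves
  have he : 0 < exp 1 := exp_pos 1
  rcases le_or_gt 2 (γ * exp 1) with hlarge | hsmall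
  · have hmono := mul_sub_log_le_mul_sub_log (c := γ / 2) (by positivity) (by nlinarith) hs₁
    have hlog : log (4 * exp 1) = 2 * log 2 + 1 := by
      rw [log_mul (by norm_num) he.ne', log_exp, show (4 : ℝ) = 2 ^ 2 by norm_num, log_pow]
      push_cast
      ring
    have hγ' : 2 / exp 1 ≤ γ := (div_le_iff₀ he).2 hlarge
    have hfactor : 0 ≤ 4 * exp 1 - 83 / 100 := by linarith [exp_one_gt_d9]
    have hid : 2 / exp 1 * (4 * exp 1 - 83 / 100) = 8 - 83 / 100 * (2 / exp 1) := by
      field_simp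
      ring
    nlinarith [mul_le_mul_of_nonneg_right hγ' hfactor]
  · set L := log (2 / γ) with hL_def
    have hL : 1 < L := by
      rw [← log_exp 1]
      exact log_lt_log he (by rwa [lt_div_iff₀ hγ, mul_comm])
    have hB : γ / 2 * (8 * L / γ) = 4 * L := by field_simp; ring
    have hmono := mul_sub_log_le_mul_sub_log (c := γ / 2) (by positivity) (by linarith) hs₂
    have hlogB : log (8 * L / γ) = 2 * log 2 + L + log L := by
      have hlogγ : log γ = log 2 - L := by
        rw [hL_def, log_div two_ne_zero hγ.ne']
        ring
      rw [log_div (by positivity) hγ.ne', log_mul (by norm_num) (by positivity), hlogγ,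
        show (8 : ℝ) = 2 ^ 3 by norm_num, log_pow]
      push_cast
      ring
    have hlogL := log_le_sub_one_of_pos (show 0 < L by linarith)
    have hγ' : 83 / 100 * γ < 83 / 100 * (2 / exp 1) := by
      rw [mul_lt_mul_iff_right₀ (by norm_num), lt_div_iff₀ he]
      exact hsmall
    linarith

theorem stmt_17_general (γ : ℝ) (hγ : 0 < γ) (r : ℕ → ℝ)
    (hr1 : r 1 ≤ Real.sqrt 2)
    (hrec : ∀ j, 1 ≤ j → 0 < r j →
      r (j + 1) ^ 2 ≤ r j ^ 2 - γ / 2 * (Real.sqrt j)⁻¹ + ((j : ℝ))⁻¹)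
    (k : ℕ)
    (hk : (k : ℝ) ≥ max (max ((2 * (2 + γ) / γ) ^ 2) ((8 * Real.log (2 / γ) / γ) ^ 2))
      (16 * Real.exp 1 ^ 2))
    (hpos : ∀ j, 1 ≤ j → j ≤ k → 0 < r j) :
    False := by
  have hk_exp : (4 * exp 1) ^ 2 ≤ (k : ℝ) := by linarith [le_of_max_le_right hk]
  have hk_log : (8 * log (2 / γ) / γ) ^ 2 ≤ (k : ℝ) :=
    (le_max_right _ _).trans (le_of_max_le_left hk)
  have hk26 : 26 ≤ k := by
    have : (26 : ℝ) ≤ k := by nlinarith [exp_one_gt_d9]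
    exact_mod_cast this
  have hr1_sq : r 1 ^ 2 ≤ 2 := by
    simpa using pow_le_pow_left₀ (hpos 1 le_rfl (by omega)).le hr1 2
  have hupper : ∑ j ∈ Ico 1 k, decrement γ j < 2 := by
    have h := sum_Ico_le_sub_of_le_sub (u := fun j => r j ^ 2)
      (f := fun j : ℕ => decrement γ j) (m := 1) (n := k) (by omega) fun j hj => by
        obtain ⟨hj₁, hjk⟩ := mem_Ico.1 hj
        have := hrec j hj₁ (hpos j hj₁ hjk.le)
        rw [decrement]
        linarith
    nlinarith [pow_pos (hpos k (by omega) le_rfl) 2]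
  have hlower := sum_Ico_decrement_ge hγ.le hk26
  have hgap := lt_mul_sub_two_mul_log hγ
    (le_sqrt_of_sq_le hk_exp) ((le_abs_self _).trans (abs_le_sqrt hk_log))
  rw [log_sqrt (Nat.cast_nonneg k)] at hgap
  linarith

/-- Finite-iteration termination: if r₁ ≤ √2 and the decrement inequality holds at every
positive index, then positivity of r_j for all 1 ≤ j ≤ k contradicts
k ≥ max((2(2+γ)/γ)², (8 log(2/γ)/γ)², 16e²). -/
theorem stmt_17 (γ : ℝ) (hγ : 0 < γ) (r : ℕ → ℝ) (hr0 : ∀ j, 0 ≤ r j)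
    (hr1 : r 1 ≤ Real.sqrt 2)
    (hrec : ∀ j, 1 ≤ j → 0 < r j →
      r (j + 1) ^ 2 ≤ r j ^ 2 - γ / 2 * (Real.sqrt j)⁻¹ + ((j : ℝ))⁻¹)
    (k : ℕ)
    (hk : (k : ℝ) ≥ max (max ((2 * (2 + γ) / γ) ^ 2) ((8 * Real.log (2 / γ) / γ) ^ 2))
      (16 * Real.exp 1 ^ 2))
    (hpos : ∀ j, 1 ≤ j → j ≤ k → 0 < r j) :
    False :=
  stmt_17_general γ hγ r hr1 hrec k hk hpos
end
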